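/- arXiv:0903.2904 — 2 statements merged into one kernel-verified Lean document; each statement's English description precedes it below -/
import Mathlib

section
/- Let the constants range over ℤ and let the term language contain standard integer polynomial arithmetic (+, ×, integer constants) with the interpreted relation =. Let D(x₁,…,xₙ) be a finite system of polynomial equations in variables x₁,…,xₙ, let ψ(x₁,…,xₙ) be the conjunction of the equations of D, let p₁,…,pₙ be distinct unary uninterpreted predicates, and let h be the po-history consisting of the single po-session {p₁(x₁),…,pₙ(xₙ)} with x₁,…,xₙ distinct variables. Then h potentially satisfies the closed formula ∃x₁:p₁. ⋯ ∃xₙ:pₙ. ψ(x₁,…,xₙ) at index 1 if and only if D has an integer solution. -/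
/-- Terms: variables, constants, and applications of interpreted function symbols
(function symbols are named by natural numbers). -/
inductive Tm (C : Type) : Type where
  | var : ℕ → Tm C
  | const : C → Tm C
  | func : ℕ → List (Tm C) → Tm C

/-- Evaluation of a term under an interpretation `F` of the function symbols and an
environment (variable assignment) `ρ`. -/
def Tm.eval {C : Type} (F : ℕ → List C → C) (ρ : ℕ → C) : Tm C → C
  | .var x => ρ x
  | .const c => c
  | .func f args => F f (args.attach.map fun t => Tm.eval F ρ t.1)
  decreasing_by simp_wf; have := List.sizeOf_lt_of_mem t.2; omega

/-- Variables occurring in a term. -/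
def Tm.fv {C : Type} : Tm C → List ℕ
  | .var x => [x]
  | .const _ => []
  | .func _ args => args.attach.flatMap fun t => Tm.fv t.1
  decreasing_by simp_wf; have := List.sizeOf_lt_of_mem t.2; omega

/-- PTLTL^FO formulas: uninterpreted predicate atoms, interpreted relation atoms,
conjunction, negation, "previous" X⁻¹, "since" S, and the guarded universal
quantifier `all xs p ψ` (∀(x₁,…,xₙ):p. ψ). -/
inductive Fm (C : Type) : Type where
  | atom : ℕ → List (Tm C) → Fm C
  | rel : ℕ → List (Tm C) → Fm C
  | and : Fm C → Fm C → Fm C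
  | not : Fm C → Fm C
  | prev : Fm C → Fm C
  | since : Fm C → Fm C → Fm C
  | all : List ℕ → ℕ → Fm C → Fm C

/-- Free variables of a formula. -/
def Fm.fv {C : Type} : Fm C → List ℕ
  | .atom _ ts => ts.flatMap Tm.fv
  | .rel _ ts => ts.flatMap Tm.fv
  | .and a b => a.fv ++ b.fv
  | .not a => a.fv
  | .prev a => a.fv
  | .since a b => a.fv ++ b.fv
  | .all xs _ a => a.fv.filter (fun v => v ∉ xs)

/-- A formula is closed if it has no free variables. -/
def Fm.Closed {C : Type} (φ : Fm C) : Prop := φ.fv = []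

/-- A session is a finite set of events `p(c₁,…,cₙ)`. -/
abbrev Session (C : Type) := Finset (ℕ × List C)

/-- A history is a (finite) list of sessions. -/
abbrev History (C : Type) := List (Session C)

/-- Update an environment on the list of variables `xs` with the list of values `cs`. -/
def updEnv {C : Type} (ρ : ℕ → C) (xs : List ℕ) (cs : List C) : ℕ → C :=
  fun v => ((xs.zip cs).lookup v).getD (ρ v)

/-- The forcing relation `(h,i) ⊨ φ` (1-based session index `i`, environment `ρ`),
with interpretation `F` of function symbols and `R` of relation symbols. -/
def Sat {C : Type} (F : ℕ → List C → C) (R : ℕ → List C → Bool) (h : History C) :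
    ℕ → (ℕ → C) → Fm C → Prop
  | i, ρ, .atom p ts => (p, ts.map (Tm.eval F ρ)) ∈ h.getD (i - 1) ∅
  | i, ρ, .rel r ts => R r (ts.map (Tm.eval F ρ)) = true
  | i, ρ, .and a b => Sat F R h i ρ a ∧ Sat F R h i ρ b
  | i, ρ, .not a => ¬ Sat F R h i ρ a
  | i, ρ, .prev a => 1 < i ∧ Sat F R h (i - 1) ρ a
  | i, ρ, .since a b =>
      ∃ j, 1 ≤ j ∧ j ≤ i ∧ Sat F R h j ρ b ∧ ∀ k, j < k → k ≤ i → Sat F R h k ρ a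
  | i, ρ, .all xs p a =>
      ∀ cs : List C, cs.length = xs.length → (p, cs) ∈ h.getD (i - 1) ∅ →
        Sat F R h i (updEnv ρ xs cs) a

/-- A partially observable session: a finite set of atoms `p(u₁,…,uₙ)` where each
argument is either a variable (`Sum.inl`) or a constant (`Sum.inr`). -/
abbrev PoSession (C : Type) := Finset (ℕ × List (ℕ ⊕ C))

/-- A partially observable history. -/
abbrev PoHistory (C : Type) := List (PoSession C)

/-- Applying a substitution `σ` to a po-history yields an ordinary history. -/
def applySub {C : Type} [DecidableEq C] (σ : ℕ → C) (h : PoHistory C) : History C :=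
  h.map fun s => s.image fun e => (e.1, e.2.map (Sum.elim σ id))

/-- `h` potentially satisfies the closed formula `ψ` at `i`: some substitution for the
unknowns of `h` makes `ψ` true at `(hσ, i)`. -/
def PotSat {C : Type} [DecidableEq C] (F : ℕ → List C → C) (R : ℕ → List C → Bool)
    (h : PoHistory C) (i : ℕ) (ψ : Fm C) : Prop :=
  ∃ σ : ℕ → C, ∀ ρ : ℕ → C, Sat F R (applySub σ h) i ρ ψ

/-- `h` adheres to the closed formula `ψ` at `i`: every substitution for the unknowns of
`h` makes `ψ` true at `(hσ, i)`. -/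
def Adheres {C : Type} [DecidableEq C] (F : ℕ → List C → C) (R : ℕ → List C → Bool)
    (h : PoHistory C) (i : ℕ) (ψ : Fm C) : Prop :=
  ∀ σ : ℕ → C, ∀ ρ : ℕ → C, Sat F R (applySub σ h) i ρ ψ

/-- Syntactic polynomial terms over variables `x₁,…,xₙ`: built from the variables
`x₁,…,xₙ`, integer constants, and the interpreted function symbols `0` (addition) and
`1` (multiplication), both binary. -/
inductive IsPolyTm (n : ℕ) : Tm ℤ → Prop where
  | var : ∀ x, 1 ≤ x → x ≤ n → IsPolyTm n (.var x)
  | const : ∀ c : ℤ, IsPolyTm n (.const c)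
  | add : ∀ s t, IsPolyTm n s → IsPolyTm n t → IsPolyTm n (.func 0 [s, t])
  | mul : ∀ s t, IsPolyTm n s → IsPolyTm n t → IsPolyTm n (.func 1 [s, t])

/-- The equation `s = t` as a formula (`=` is the interpreted relation symbol `0`). -/
def eqFm (e : Tm ℤ × Tm ℤ) : Fm ℤ := .rel 0 [e.1, e.2]

/-- The conjunction `ψ(x₁,…,xₙ)` of the equations of the system `e :: es`. -/
def conjFm (e : Tm ℤ × Tm ℤ) (es : List (Tm ℤ × Tm ℤ)) : Fm ℤ :=
  (es.map eqFm).foldl .and (eqFm e)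

/-- `∃x:p.ψ := ¬∀x:p.¬ψ`. -/
def exQ (x p : ℕ) (a : Fm ℤ) : Fm ℤ := .not (.all [x] p (.not a))

/-- Prefix the formula `a` with `∃x₁:p₁. ⋯ ∃x_k:p_k.` (predicate `pᵢ` is predicate
symbol `i`, variable `xᵢ` is variable `i`). -/
def exPrefix : ℕ → Fm ℤ → Fm ℤ
  | 0, a => a
  | k + 1, a => exPrefix k (exQ (k + 1) (k + 1) a)

/-- The po-history consisting of the single po-session `{p₁(x₁),…,pₙ(xₙ)}`. -/
def dioHistory (n : ℕ) : PoHistory ℤ :=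
  [(Finset.Icc 1 n).image fun k => (k, [Sum.inl k])]

/-!
In the substituted history `hσ` the only tuple guarded by `pᵢ` is `(σ xᵢ)`, so each guarded
existential `∃xᵢ:pᵢ` just binds `xᵢ` to `σ xᵢ`; the prefix therefore evaluates `ψ` at `σ` on
`x₁,…,xₙ`, and polynomial terms read no other variables. A solution of `D` is thus the same
thing as a substitution witnessing potential satisfaction.
-/

lemma Tm.eval_func_pair {C : Type} (F : ℕ → List C → C) (ρ : ℕ → C) (f : ℕ) (s t : Tm C) :
    Tm.eval F ρ (.func f [s, t]) = F f [Tm.eval F ρ s, Tm.eval F ρ t] := by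
  rw [Tm.eval]; simp

lemma IsPolyTm.eval_congr {n : ℕ} {t : Tm ℤ} (ht : IsPolyTm n t) (F : ℕ → List ℤ → ℤ)
    {ρ ρ' : ℕ → ℤ} (h : ∀ v ∈ Finset.Icc 1 n, ρ v = ρ' v) :
    Tm.eval F ρ t = Tm.eval F ρ' t := by
  induction ht with
  | var x h1 h2 => simp only [Tm.eval]; exact h x (Finset.mem_Icc.mpr ⟨h1, h2⟩)
  | const c => simp only [Tm.eval]
  | add s t _ _ ihs iht => rw [Tm.eval_func_pair, Tm.eval_func_pair, ihs, iht]
  | mul s t _ _ ihs iht => rw [Tm.eval_func_pair, Tm.eval_func_pair, ihs, iht]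

lemma updEnv_singleton {C : Type} (ρ : ℕ → C) (x : ℕ) (c : C) :
    updEnv ρ [x] [c] = Function.update ρ x c := by
  funext v
  by_cases hv : v = x
  · subst hv; simp [updEnv]
  · simp [updEnv, List.lookup, hv, beq_false_of_ne hv]

lemma sat_foldl_and {C : Type} (F : ℕ → List C → C) (R : ℕ → List C → Bool) (h : History C)
    (i : ℕ) (ρ : ℕ → C) (b : Fm C) (l : List (Fm C)) :
    Sat F R h i ρ (l.foldl .and b) ↔ Sat F R h i ρ b ∧ ∀ c ∈ l, Sat F R h i ρ c := by
  induction l generalizing b with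
  | nil => simp
  | cons c l ih =>
    rw [List.foldl_cons, ih]
    simp only [Sat, List.forall_mem_cons, and_assoc]

section Equations

variable (F : ℕ → List ℤ → ℤ) {R : ℕ → List ℤ → Bool}
  (heq : ∀ a b : ℤ, R 0 [a, b] = true ↔ a = b) (h : History ℤ) (i : ℕ) (ρ : ℕ → ℤ)
include heq

lemma sat_eqFm (d : Tm ℤ × Tm ℤ) :
    Sat F R h i ρ (eqFm d) ↔ Tm.eval F ρ d.1 = Tm.eval F ρ d.2 := by
  simp only [eqFm, Sat, List.map_cons, List.map_nil, heq]

lemma sat_conjFm (e : Tm ℤ × Tm ℤ) (es : List (Tm ℤ × Tm ℤ)) :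
    Sat F R h i ρ (conjFm e es) ↔ ∀ d ∈ e :: es, Tm.eval F ρ d.1 = Tm.eval F ρ d.2 := by
  simp only [conjFm, sat_foldl_and, List.forall_mem_map, List.forall_mem_cons,
    sat_eqFm F heq]

end Equations

lemma mem_applySub_dioHistory (σ : ℕ → ℤ) (n p : ℕ) (cs : List ℤ) :
    (p, cs) ∈ (applySub σ (dioHistory n)).getD 0 ∅ ↔ p ∈ Finset.Icc 1 n ∧ cs = [σ p] := by
  simp only [applySub, dioHistory, List.map_cons, List.map_nil, List.getD_cons_zero,
    Finset.mem_image, Prod.mk.injEq]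
  constructor
  · rintro ⟨_, ⟨k, hk, rfl⟩, rfl, rfl⟩
    exact ⟨hk, rfl⟩
  · rintro ⟨hp, rfl⟩
    exact ⟨_, ⟨p, hp, rfl⟩, rfl, rfl⟩

section DioHistory

variable (F : ℕ → List ℤ → ℤ) (R : ℕ → List ℤ → Bool) {σ : ℕ → ℤ} {n : ℕ}

lemma sat_exQ_dioHistory {k : ℕ} (hk : k ∈ Finset.Icc 1 n) (ρ : ℕ → ℤ) (a : Fm ℤ) :
    Sat F R (applySub σ (dioHistory n)) 1 ρ (exQ k k a) ↔
      Sat F R (applySub σ (dioHistory n)) 1 (Function.update ρ k (σ k)) a := by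
  simp only [exQ, Sat, Nat.sub_self, mem_applySub_dioHistory, List.length_singleton, not_forall,
    not_not]
  constructor
  · rintro ⟨_, -, ⟨-, rfl⟩, hsat⟩
    rwa [updEnv_singleton] at hsat
  · intro hsat
    exact ⟨[σ k], rfl, ⟨hk, rfl⟩, by rwa [updEnv_singleton]⟩

lemma sat_exPrefix_dioHistory {k : ℕ} (hk : k ≤ n) (ρ : ℕ → ℤ) (a : Fm ℤ) :
    Sat F R (applySub σ (dioHistory n)) 1 ρ (exPrefix k a) ↔
      Sat F R (applySub σ (dioHistory n)) 1 ((Finset.Icc 1 k).piecewise σ ρ) a := by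
  induction k generalizing a with
  | zero => rw [exPrefix, Finset.Icc_eq_empty (by omega), Finset.piecewise_empty]
  | succ k ih =>
    have hk' : k + 1 ∈ Finset.Icc 1 n := Finset.mem_Icc.mpr ⟨by omega, hk⟩
    rw [exPrefix, ih (by omega), sat_exQ_dioHistory F R hk', ← Finset.piecewise_insert,
      Finset.insert_Icc_right_eq_Icc_add_one (by omega)]

end DioHistory

theorem potsat_iff_diophantine_general (F : ℕ → List ℤ → ℤ) (R : ℕ → List ℤ → Bool)
    (heq : ∀ a b : ℤ, R 0 [a, b] = true ↔ a = b)
    (n : ℕ) (e : Tm ℤ × Tm ℤ) (es : List (Tm ℤ × Tm ℤ))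
    (hD : ∀ d ∈ e :: es, IsPolyTm n d.1 ∧ IsPolyTm n d.2) :
    PotSat F R (dioHistory n) 1 (exPrefix n (conjFm e es)) ↔
      ∃ σ : ℕ → ℤ, ∀ d ∈ e :: es, Tm.eval F σ d.1 = Tm.eval F σ d.2 := by
  constructor
  · rintro ⟨σ, hσ⟩
    have hsat := (sat_exPrefix_dioHistory F R le_rfl σ _).mp (hσ σ)
    rw [Finset.piecewise_same, sat_conjFm F heq] at hsat
    exact ⟨σ, hsat⟩
  · rintro ⟨σ, hσ⟩
    refine ⟨σ, fun ρ => ?_⟩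
    rw [sat_exPrefix_dioHistory F R le_rfl, sat_conjFm F heq]
    have hagree : ∀ v ∈ Finset.Icc 1 n, (Finset.Icc 1 n).piecewise σ ρ v = σ v :=
      fun v hv => Finset.piecewise_eq_of_mem _ _ _ hv
    intro d hd
    rw [(hD d hd).1.eval_congr F hagree, (hD d hd).2.eval_congr F hagree]
    exact hσ d hd

/-- Over ℤ with polynomial arithmetic (`+` is function symbol `0`,
`×` is function symbol `1`, `=` is relation symbol `0`): for a finite system
`D = e :: es` of polynomial equations in `x₁,…,xₙ`, the po-history `{p₁(x₁),…,pₙ(xₙ)}`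
potentially satisfies `∃x₁:p₁.⋯∃xₙ:pₙ. ψ(x₁,…,xₙ)` at index `1` iff `D` has an integer
solution. -/
theorem potsat_iff_diophantine (F : ℕ → List ℤ → ℤ) (R : ℕ → List ℤ → Bool)
    (hadd : ∀ a b : ℤ, F 0 [a, b] = a + b) (hmul : ∀ a b : ℤ, F 1 [a, b] = a * b)
    (heq : ∀ a b : ℤ, R 0 [a, b] = true ↔ a = b)
    (n : ℕ) (e : Tm ℤ × Tm ℤ) (es : List (Tm ℤ × Tm ℤ))
    (hD : ∀ d ∈ e :: es, IsPolyTm n d.1 ∧ IsPolyTm n d.2) :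
    PotSat F R (dioHistory n) 1 (exPrefix n (conjFm e es)) ↔
      ∃ σ : ℕ → ℤ, ∀ d ∈ e :: es, Tm.eval F σ d.1 = Tm.eval F σ d.2 :=
  potsat_iff_diophantine_general F R heq n e es hD
end

section
/- Let φ(x⃗) be a formula all of whose atoms are interpreted relations (φ contains no uninterpreted predicate atoms and no temporal operators), let p and q be uninterpreted predicates of appropriate arities, and let h be the history consisting of the single session {q(0)}. Then, under the extended-guard semantics with the since-guard p(x⃗) S q(y), h ⊨ ∃(x⃗,y) : (p(x⃗) S q(y)). φ(x⃗) if and only if there exist constants c⃗ such that φ(c⃗) is true; i.e., the model checking problem is equivalent to the validity of the unrestricted first-order formula ∃x⃗. φ(x⃗). -/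
/-- Formulas all of whose atoms are interpreted relations (no uninterpreted predicate
atoms and no temporal operators). -/
inductive InterpOnly {C : Type} : Fm C → Prop where
  | rel : ∀ r ts, InterpOnly (.rel r ts)
  | and : ∀ a b, InterpOnly a → InterpOnly b → InterpOnly (.and a b)
  | not : ∀ a, InterpOnly a → InterpOnly (.not a)


theorem Tm.eval_congr {C : Type} (F : ℕ → List C → C) (ρ ρ' : ℕ → C) :
    ∀ t : Tm C, (∀ v ∈ t.fv, ρ v = ρ' v) → t.eval F ρ = t.eval F ρ'
  | .var x, h => by simp only [Tm.eval]; exact h x (by rw [Tm.fv]; simp)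
  | .const c, _ => by simp only [Tm.eval]
  | .func f args, h => by
      simp only [Tm.eval]
      congr 1
      refine List.map_congr_left fun t ht => ?_
      exact Tm.eval_congr F ρ ρ' t.1 (fun v hv => h v (by
        rw [Tm.fv]
        exact List.mem_flatMap.mpr ⟨t, List.mem_attach _ _, hv⟩))
  decreasing_by simp_wf; have := List.sizeOf_lt_of_mem t.2; omega

theorem Sat_congr {C : Type} (F : ℕ → List C → C) (R : ℕ → List C → Bool)
    (h h' : History C) (i i' : ℕ) (ρ ρ' : ℕ → C)
    (φ : Fm C) (hio : InterpOnly φ) (hρ : ∀ v ∈ φ.fv, ρ v = ρ' v) :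
    Sat F R h i ρ φ ↔ Sat F R h' i' ρ' φ := by
  induction hio with
  | rel r ts =>
    simp only [Sat]
    have : ts.map (Tm.eval F ρ) = ts.map (Tm.eval F ρ') :=
      List.map_congr_left fun t ht => Tm.eval_congr F ρ ρ' t (fun v hv => hρ v (by
        simp only [Fm.fv, List.mem_flatMap]; exact ⟨t, ht, hv⟩))
    rw [this]
  | and a b ha hb iha ihb =>
    simp only [Sat]
    rw [iha (fun v hv => hρ v (by simp [Fm.fv, hv])),
        ihb (fun v hv => hρ v (by simp [Fm.fv, hv]))]
  | not a ha iha =>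
    simp only [Sat]
    rw [iha hρ]

theorem lookup_zip_append_mem {C : Type} (xs ys : List ℕ) (cs ds : List C) (v : ℕ)
    (hv : v ∈ xs) (hlen : cs.length = xs.length) :
    ((xs ++ ys).zip (cs ++ ds)).lookup v = (xs.zip cs).lookup v := by
  induction xs generalizing cs with
  | nil => simp at hv
  | cons x xs ih =>
    cases cs with
    | nil => simp at hlen
    | cons c cs =>
      simp only [List.cons_append, List.zip_cons_cons]
      by_cases hvx : v = x
      · rw [List.lookup_cons, List.lookup_cons,
          show (v == x) = true from beq_iff_eq.mpr hvx]
      · have hv' : v ∈ xs := by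
          rcases List.mem_cons.mp hv with h1 | h1
          · exact absurd h1 hvx
          · exact h1
        simp only [List.length_cons, Nat.succ.injEq] at hlen
        rw [List.lookup_cons, List.lookup_cons, show (v == x) = false from beq_false_of_ne hvx]
        exact ih cs hv' hlen
  
theorem lookup_zip_append_notmem {C : Type} (xs ys : List ℕ) (cs ds : List C) (v : ℕ)
    (hv : v ∉ xs) (hlen : cs.length = xs.length) :
    ((xs ++ ys).zip (cs ++ ds)).lookup v = (ys.zip ds).lookup v := by
  induction xs generalizing cs with
  | nil =>
    cases cs with
    | nil => simp
    | cons c cs => simp at hlen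
  | cons x xs ih =>
    cases cs with
    | nil => simp at hlen
    | cons c cs =>
      simp only [List.cons_append, List.zip_cons_cons]
      have hvx : v ≠ x := fun h => hv (by simp [h])
      simp only [List.length_cons, Nat.succ.injEq] at hlen
      rw [List.lookup_cons, show (v == x) = false from beq_false_of_ne hvx]
      exact ih cs (fun h => hv (List.mem_cons_of_mem _ h)) hlen

/-- Let `φ(x⃗)` contain only interpreted-relation atoms, let `p ≠ q`
be uninterpreted predicates, and let `h` be the one-session history `{q(0)}`.  Under
the extended-guard semantics with the since-guard `p(x⃗) S q(y)`,
`h ⊨ ∃(x⃗,y) : (p(x⃗) S q(y)). φ(x⃗)` — i.e. some tuple of constants satisfies the guard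
`p(x⃗) S q(y)` and `φ` at `(h,1)` — iff there are constants `c⃗` with `φ(c⃗)` true. -/
theorem since_guard_undecidability {C : Type}
    (F : ℕ → List C → C) (R : ℕ → List C → Bool)
    (xs : List ℕ) (y : ℕ) (hnd : xs.Nodup) (hy : y ∉ xs)
    (p q : ℕ) (hpq : p ≠ q) (c0 : C)
    (φ : Fm C) (hio : InterpOnly φ) (hfv : ∀ v ∈ φ.fv, v ∈ xs) (ρ : ℕ → C) :
    (∃ cs : List C, cs.length = (xs ++ [y]).length ∧
        Sat F R [{(q, [c0])}] 1 (updEnv ρ (xs ++ [y]) cs)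
          (.since (.atom p (xs.map Tm.var)) (.atom q [Tm.var y])) ∧
        Sat F R [{(q, [c0])}] 1 (updEnv ρ (xs ++ [y]) cs) φ) ↔
      (∃ cs : List C, cs.length = xs.length ∧
        Sat F R [{(q, [c0])}] 1 (updEnv ρ xs cs) φ) := by
  constructor
  · rintro ⟨cs, hlen, _, hφ⟩
    refine ⟨cs.take xs.length, ?_, ?_⟩
    · simp at hlen; simp; omega
    · refine (Sat_congr F R _ _ 1 1 _ _ φ hio ?_).mp hφ
      intro v hv
      have hvxs := hfv v hv
      simp only [updEnv]
      rw [show cs = cs.take xs.length ++ cs.drop xs.length by simp,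
        lookup_zip_append_mem xs [y] (cs.take xs.length) (cs.drop xs.length) v hvxs
          (by simp at hlen ⊢; omega)]
      simp
  · rintro ⟨cs, hlen, hφ⟩
    refine ⟨cs ++ [c0], by simp [hlen], ?_, ?_⟩
    · refine ⟨1, le_refl 1, le_refl 1, ?_, fun k hk hk' => absurd (lt_of_lt_of_le hk hk') (lt_irrefl 1)⟩
      simp only [Sat, List.map_cons, List.map_nil, Tm.eval]
      have : updEnv ρ (xs ++ [y]) (cs ++ [c0]) y = c0 := by
        simp only [updEnv]
        rw [lookup_zip_append_notmem xs [y] cs [c0] y hy hlen]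
        simp [List.lookup]
      rw [this]
      simp
    · refine (Sat_congr F R _ _ 1 1 _ _ φ hio ?_).mpr hφ
      intro v hv
      have hvxs := hfv v hv
      simp only [updEnv]
      rw [lookup_zip_append_mem xs [y] cs [c0] v hvxs hlen]
end
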